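/- arXiv:2209.14579 — 2 statements merged into one kernel-verified Lean document; each statement's English description precedes it below -/
import Mathlib

section
/- Let A = Aᵀ ∈ ℝ^{n×n}, 1 ≤ s < d(A), and consider the iteration ṽ_{k+1} = Arnoldi projection of v_k with respect to A and s, v_{k+1} = ṽ_{k+1}/‖ṽ_{k+1}‖, with unit initial vector v₀ satisfying d(A,v₀) ≥ s+1. Let τ be the common limit of the nondecreasing sequence {‖ṽ_k‖}. Then each limit point v_* of {v_{2k}} satisfies (Q(A) − τ² I)v_* = 0, where Q(z) = P_s(z; w_*) P_s(z; v_*) is monic of degree 2s, with w_* = P_s(A;v_*)v_*/τ. In particular, s < d(A,v_*) ≤ 2s. -/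
/-
Let `T = TA A s`. For symmetric `A`, `⟪aproj (T v), v⟫ = ‖aproj v‖`: write
`aproj (T v) = q(A) (T v)` with `q` monic of degree `s`; then `q(A)` is self-adjoint, and `q(A) v`
differs from `aproj v` by a Krylov vector, which is orthogonal to `aproj v`. By Cauchy–Schwarz the
norms `‖aproj v_k‖` increase to `τ`. The norm of `aproj` is an infimum of continuous functions, and
`aproj` is continuous wherever it is nonzero (the Gram matrix of the Krylov basis is then
invertible), so both `v_*` and `w_* = T v_*` have `‖aproj‖ = τ`. Hence the Cauchy–Schwarz step at
`v_*` is an equality: `aproj w_* = τ v_*`, i.e. `P_s(A; w_*) P_s(A; v_*) v_* = τ² v_*`. Subtracting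
`τ²` gives an annihilating polynomial of degree `2s`, while `aproj v_* ≠ 0` rules out nonzero
annihilating polynomials of degree at most `s`.
-/

open Polynomial Filter Topology Matrix

noncomputable section

def mulv {ι : Type*} [Fintype ι] (A : Matrix ι ι ℝ) (v : EuclideanSpace ℝ ι) :
    EuclideanSpace ℝ ι :=
  (WithLp.equiv 2 (ι → ℝ)).symm (A.mulVec ((WithLp.equiv 2 (ι → ℝ)) v))

def Krylov {ι : Type*} [Fintype ι] [DecidableEq ι] (A : Matrix ι ι ℝ) (s : ℕ) (v : EuclideanSpace ℝ ι) :
    Submodule ℝ (EuclideanSpace ℝ ι) :=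
  Submodule.span ℝ (Set.range fun i : Fin s => mulv (A ^ (i : ℕ)) v)

def IsArnoldiProj {ι : Type*} [Fintype ι] [DecidableEq ι] (A : Matrix ι ι ℝ) (s : ℕ)
    (v w : EuclideanSpace ℝ ι) : Prop :=
  w - mulv (A ^ s) v ∈ Krylov A s v ∧ ∀ u ∈ Krylov A s v, inner ℝ w u = (0 : ℝ)

def vgrade {ι : Type*} [Fintype ι] [DecidableEq ι] (A : Matrix ι ι ℝ)
    (v : EuclideanSpace ℝ ι) : ℕ :=
  sInf {d | ∃ p : ℝ[X], p ≠ 0 ∧ p.natDegree = d ∧ mulv (aeval A p) v = 0}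

def dmin {ι : Type*} [Fintype ι] [DecidableEq ι] (A : Matrix ι ι ℝ) : ℕ :=
  (minpoly ℝ A).natDegree

def Phi {ι : Type*} [Fintype ι] [DecidableEq ι] (A : Matrix ι ι ℝ) (s : ℕ) : ℝ :=
  sSup {r | ∃ v : EuclideanSpace ℝ ι, ‖v‖ = 1 ∧
    r = sInf {t | ∃ q : ℝ[X], q.Monic ∧ q.natDegree = s ∧ t = ‖mulv (aeval A q) v‖}}

def opNorm {ι : Type*} [Fintype ι] [DecidableEq ι] (A : Matrix ι ι ℝ) : ℝ :=
  ‖Matrix.toEuclideanCLM (𝕜 := ℝ) A‖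

def aproj {ι : Type*} [Fintype ι] [DecidableEq ι] (A : Matrix ι ι ℝ) (s : ℕ)
    (v : EuclideanSpace ℝ ι) : EuclideanSpace ℝ ι :=
  mulv (A ^ s) v - (Submodule.orthogonalProjection (Krylov A s v) (mulv (A ^ s) v) : EuclideanSpace ℝ ι)

def TA {ι : Type*} [Fintype ι] [DecidableEq ι] (A : Matrix ι ι ℝ) (s : ℕ)
    (v : EuclideanSpace ℝ ι) : EuclideanSpace ℝ ι :=
  ‖aproj A s v‖⁻¹ • aproj A s v

lemma Polynomial.Monic.degree_sub_X_pow_lt {R : Type*} [Ring R] [Nontrivial R] {q : R[X]}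
    (hq : q.Monic) : (q - X ^ q.natDegree).degree < (q.natDegree : WithBot ℕ) := by
  have hdeg : q.degree = q.natDegree := degree_eq_natDegree hq.ne_zero
  calc (q - X ^ q.natDegree).degree < q.degree :=
        degree_sub_lt_left (by rw [hdeg, degree_X_pow]) hq.ne_zero
          (by rw [hq.leadingCoeff, leadingCoeff_X_pow])
    _ = q.natDegree := hdeg

section Projection

variable {E : Type*} [NormedAddCommGroup E] [InnerProductSpace ℝ E] [FiniteDimensional ℝ E]
  {κ : Type*} [Fintype κ]

lemma starProjection_span_range_eq_sum {f : κ → E} {x : E} {c : κ → ℝ}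
    (hc : Matrix.gram ℝ f *ᵥ c = fun j => inner ℝ (f j) x) :
    (Submodule.span ℝ (Set.range f)).starProjection x = ∑ i, c i • f i := by
  refine Submodule.eq_starProjection_of_mem_of_inner_eq_zero
    (Submodule.sum_mem _ fun i _ => Submodule.smul_mem _ _ (Submodule.subset_span ⟨i, rfl⟩))
    fun w hw => ?_
  obtain ⟨d, rfl⟩ := (Submodule.mem_span_range_iff_exists_fun ℝ).mp hw
  have horth : ∀ j, inner ℝ (f j) (x - ∑ i, c i • f i) = 0 := fun j => by
    have := congr_fun hc j
    simp only [Matrix.mulVec, dotProduct, Matrix.gram, Matrix.of_apply] at this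
    simp [inner_sub_right, inner_sum, real_inner_smul_right, ← this, mul_comm]
  rw [inner_sum]
  exact Finset.sum_eq_zero fun j _ => by
    rw [real_inner_smul_right, real_inner_comm, horth, mul_zero]

variable [DecidableEq κ] {X : Type*} [TopologicalSpace X]

lemma continuousAt_starProjection_span_range {f : X → κ → E} {g : X → E} {x₀ : X}
    (hf : Continuous f) (hg : Continuous g) (hli : LinearIndependent ℝ (f x₀)) :
    ContinuousAt (fun x => (Submodule.span ℝ (Set.range (f x))).starProjection (g x)) x₀ := by
  set G : X → Matrix κ κ ℝ := fun x => Matrix.gram ℝ (f x)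
  set b : X → κ → ℝ := fun x j => inner ℝ (f x j) (g x)
  have hG : Continuous G := continuous_pi fun i => continuous_pi fun j =>
    ((continuous_apply i).comp hf).inner ((continuous_apply j).comp hf)
  have hb : Continuous b := continuous_pi fun j => ((continuous_apply j).comp hf).inner hg
  have hdet : (G x₀).det ≠ 0 := Matrix.det_gram_ne_zero_iff_linearIndependent.mpr hli
  have hdetG : Continuous fun x => (G x).det := hG.matrix_det
  -- Cramer's rule solves the normal equations wherever the Gram determinant is nonzero.
  set c : X → κ → ℝ := fun x => (G x).det⁻¹ • (G x).cramer (b x)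
  have hc : ContinuousAt c x₀ :=
    ((hdetG.continuousAt.inv₀ hdet).smul (hG.matrix_cramer hb).continuousAt)
  have heq : (fun x => ∑ i, c x i • f x i) =ᶠ[𝓝 x₀]
      fun x => (Submodule.span ℝ (Set.range (f x))).starProjection (g x) := by
    filter_upwards [hdetG.continuousAt.eventually_ne hdet] with x hx
    refine (starProjection_span_range_eq_sum ?_).symm
    simp [c, Matrix.mulVec_smul, Matrix.mulVec_cramer, smul_smul, inv_mul_cancel₀ hx, G, b]
  refine ContinuousAt.congr ?_ heq
  exact tendsto_finsetSum _ fun i _ =>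
    ((continuous_apply i).continuousAt.comp hc).smul ((continuous_apply i).comp hf).continuousAt

end Projection

section Arnoldi

variable {ι : Type*} [Fintype ι] [DecidableEq ι]

lemma mulv_eq_toEuclideanCLM (A : Matrix ι ι ℝ) (v : EuclideanSpace ℝ ι) :
    mulv A v = Matrix.toEuclideanCLM (𝕜 := ℝ) A v := rfl

lemma continuous_mulv (A : Matrix ι ι ℝ) : Continuous (mulv A) :=
  (Matrix.toEuclideanCLM (𝕜 := ℝ) A).continuous

@[simp] lemma mulv_mul (A B : Matrix ι ι ℝ) (v : EuclideanSpace ℝ ι) :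
    mulv (A * B) v = mulv A (mulv B v) := by
  simp [mulv_eq_toEuclideanCLM]

@[simp] lemma mulv_sub (A B : Matrix ι ι ℝ) (v : EuclideanSpace ℝ ι) :
    mulv (A - B) v = mulv A v - mulv B v := by
  simp [mulv_eq_toEuclideanCLM, map_sub]

@[simp] lemma mulv_algebraMap (c : ℝ) (v : EuclideanSpace ℝ ι) :
    mulv (algebraMap ℝ (Matrix ι ι ℝ) c) v = c • v := by
  simp [mulv_eq_toEuclideanCLM, Algebra.algebraMap_eq_smul_one]

@[simp] lemma mulv_smul (A : Matrix ι ι ℝ) (c : ℝ) (v : EuclideanSpace ℝ ι) :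
    mulv A (c • v) = c • mulv A v := by
  simp [mulv_eq_toEuclideanCLM]

lemma inner_mulv_of_isSymm {A : Matrix ι ι ℝ} (hA : A.IsSymm) (x y : EuclideanSpace ℝ ι) :
    inner ℝ (mulv A x) y = inner ℝ x (mulv A y) :=
  Matrix.isSymmetric_toEuclideanLin_iff.mpr (Matrix.isHermitian_iff_isSymm.mpr hA) x y

lemma Matrix.IsSymm.aeval {A : Matrix ι ι ℝ} (hA : A.IsSymm) (p : ℝ[X]) : (aeval A p).IsSymm := by
  induction p using Polynomial.induction_on' with
  | add p q hp hq => simpa using hp.add hq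
  | monomial n a => rw [aeval_monomial, ← Algebra.smul_def]; exact (hA.pow n).smul a

variable {A : Matrix ι ι ℝ} {s : ℕ} {v : EuclideanSpace ℝ ι}

lemma mulv_aeval_sum_fin (c : Fin s → ℝ) :
    mulv (aeval A (∑ i : Fin s, C (c i) * X ^ (i : ℕ))) v = ∑ i, c i • mulv (A ^ (i : ℕ)) v := by
  simp [mulv_eq_toEuclideanCLM, Algebra.algebraMap_eq_smul_one]

lemma mem_Krylov_iff {x : EuclideanSpace ℝ ι} :
    x ∈ Krylov A s v ↔ ∃ r : ℝ[X], r.degree < s ∧ mulv (aeval A r) v = x := by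
  rw [Krylov, Submodule.mem_span_range_iff_exists_fun]
  constructor
  · rintro ⟨c, rfl⟩
    exact ⟨_, degree_sum_fin_lt c, mulv_aeval_sum_fin c⟩
  · rintro ⟨r, hr, rfl⟩
    refine ⟨fun i => r.coeff i, ?_⟩
    rcases eq_or_ne r 0 with rfl | hr0
    · simp [mulv_eq_toEuclideanCLM]
    rw [aeval_eq_sum_range' ((natDegree_lt_iff_degree_lt hr0).mpr hr), ← Fin.sum_univ_eq_sum_range]
    simp [mulv_eq_toEuclideanCLM]

lemma linearIndependent_krylov
    (h : ∀ r : ℝ[X], r ≠ 0 → r.degree < s → mulv (aeval A r) v ≠ 0) :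
    LinearIndependent ℝ (fun i : Fin s => mulv (A ^ (i : ℕ)) v) := by
  rw [Fintype.linearIndependent_iff]
  intro c hc i
  have hr : ∑ j : Fin s, C (c j) * X ^ (j : ℕ) = 0 := by
    by_contra hr
    exact h _ hr (degree_sum_fin_lt c) (by rw [mulv_aeval_sum_fin, hc])
  simpa [finsetSum_coeff, coeff_C_mul, coeff_X_pow, Fin.val_inj] using congr_arg (coeff · i) hr

lemma aproj_eq_sub_starProjection (A : Matrix ι ι ℝ) (s : ℕ) (v : EuclideanSpace ℝ ι) :
    aproj A s v = mulv (A ^ s) v - (Krylov A s v).starProjection (mulv (A ^ s) v) := rfl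

lemma inner_aproj_eq_zero {u : EuclideanSpace ℝ ι} (hu : u ∈ Krylov A s v) :
    inner ℝ (aproj A s v) u = 0 :=
  Submodule.starProjection_inner_eq_zero _ u hu

lemma IsArnoldiProj.eq_aproj {w : EuclideanSpace ℝ ι} (h : IsArnoldiProj A s v w) :
    w = aproj A s v := by
  have hproj : (Krylov A s v).starProjection (mulv (A ^ s) v) = mulv (A ^ s) v - w := by
    refine Submodule.eq_starProjection_of_mem_of_inner_eq_zero ?_ fun u hu => ?_
    · simpa using Submodule.neg_mem _ h.1
    · simpa using h.2 u hu
  rw [aproj_eq_sub_starProjection, hproj, sub_sub_cancel]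

lemma aeval_sub_aproj_mem_Krylov {q : ℝ[X]} (hq : q.Monic) (hqd : q.natDegree = s) :
    mulv (aeval A q) v - aproj A s v ∈ Krylov A s v := by
  have hr : mulv (aeval A (q - X ^ s)) v ∈ Krylov A s v :=
    mem_Krylov_iff.mpr ⟨_, hqd ▸ hq.degree_sub_X_pow_lt, rfl⟩
  have hsplit : mulv (aeval A q) v - aproj A s v =
      mulv (aeval A (q - X ^ s)) v + (Krylov A s v).starProjection (mulv (A ^ s) v) := by
    rw [map_sub, mulv_sub, aeval_X_pow, aproj_eq_sub_starProjection]
    abel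
  rw [hsplit]
  exact Submodule.add_mem _ hr (Submodule.starProjection_apply_mem _ _)

lemma exists_monic_aeval_eq_aproj (s : ℕ) (v : EuclideanSpace ℝ ι) :
    ∃ q : ℝ[X], q.Monic ∧ q.natDegree = s ∧ mulv (aeval A q) v = aproj A s v := by
  obtain ⟨r, hr, hrv⟩ := mem_Krylov_iff.mp
    (Submodule.starProjection_apply_mem (Krylov A s v) (mulv (A ^ s) v))
  have hrs : r.degree < (X ^ s : ℝ[X]).degree := by rwa [degree_X_pow]
  refine ⟨X ^ s - r, monic_X_pow_sub hr, ?_, ?_⟩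
  · exact natDegree_eq_of_degree_eq_some (by rw [degree_sub_eq_left_of_degree_lt hrs, degree_X_pow])
  · rw [map_sub, mulv_sub, aeval_X_pow, hrv, aproj_eq_sub_starProjection]

lemma norm_aproj_le {q : ℝ[X]} (hq : q.Monic) (hqd : q.natDegree = s) :
    ‖aproj A s v‖ ≤ ‖mulv (aeval A q) v‖ := by
  set k := mulv (aeval A q) v - aproj A s v
  have horth : inner ℝ (aproj A s v) k = 0 :=
    inner_aproj_eq_zero (aeval_sub_aproj_mem_Krylov hq hqd)
  have hpyth := norm_add_sq_eq_norm_sq_add_norm_sq_real horth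
  rw [add_sub_cancel] at hpyth
  nlinarith [norm_nonneg (aproj A s v), norm_nonneg (mulv (aeval A q) v), sq_nonneg ‖k‖]

lemma aeval_ne_zero_of_aproj_ne_zero (h : aproj A s v ≠ 0) {p : ℝ[X]} (hp : p ≠ 0)
    (hps : p.natDegree ≤ s) : mulv (aeval A p) v ≠ 0 := by
  intro hpv
  set m : ℝ[X] := X ^ (s - p.natDegree) * (p * C p.leadingCoeff⁻¹)
  have hmonic : (p * C p.leadingCoeff⁻¹).Monic := monic_mul_leadingCoeff_inv hp
  have hm : m.Monic := (monic_X_pow _).mul hmonic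
  have hmd : m.natDegree = s := by
    rw [(monic_X_pow _).natDegree_mul hmonic, natDegree_X_pow,
      natDegree_mul_leadingCoeff_inv _ hp]
    omega
  have hmv : mulv (aeval A m) v = 0 := by
    rw [show m = X ^ (s - p.natDegree) * C p.leadingCoeff⁻¹ * p by ring, map_mul, mulv_mul, hpv]
    simp [mulv_eq_toEuclideanCLM]
  have := norm_aproj_le (A := A) (v := v) hm hmd
  rw [hmv, norm_zero] at this
  exact h (norm_le_zero_iff.mp this)

lemma exists_aeval_eq_zero_natDegree_eq_vgrade (A : Matrix ι ι ℝ) (v : EuclideanSpace ℝ ι) :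
    ∃ p : ℝ[X], p ≠ 0 ∧ p.natDegree = vgrade A v ∧ mulv (aeval A p) v = 0 := by
  refine Nat.sInf_mem (s := {d | ∃ p : ℝ[X], p ≠ 0 ∧ p.natDegree = d ∧ mulv (aeval A p) v = 0})
    ⟨_, minpoly ℝ A, minpoly.ne_zero (Matrix.isIntegral A), rfl, ?_⟩
  simp [mulv_eq_toEuclideanCLM]

lemma vgrade_le {p : ℝ[X]} (hp : p ≠ 0) (hpv : mulv (aeval A p) v = 0) :
    vgrade A v ≤ p.natDegree :=
  Nat.sInf_le ⟨p, hp, rfl, hpv⟩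

lemma aproj_ne_zero_iff_lt_vgrade : aproj A s v ≠ 0 ↔ s < vgrade A v := by
  constructor
  · intro h
    obtain ⟨p, hp, hpd, hpv⟩ := exists_aeval_eq_zero_natDegree_eq_vgrade A v
    by_contra! hle
    exact aeval_ne_zero_of_aproj_ne_zero h hp (hpd ▸ hle) hpv
  · intro hlt h
    obtain ⟨q, hq, hqd, hqv⟩ := exists_monic_aeval_eq_aproj (A := A) s v
    have := vgrade_le hq.ne_zero (hqv.trans h)
    omega

lemma norm_TA (h : aproj A s v ≠ 0) : ‖TA A s v‖ = 1 :=
  norm_smul_inv_norm h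

lemma inner_aproj_TA (hA : A.IsSymm) :
    inner ℝ (aproj A s (TA A s v)) v = ‖aproj A s v‖ := by
  set ν := ‖aproj A s v‖
  obtain ⟨q', hq', hq'd, hq'v⟩ := exists_monic_aeval_eq_aproj (A := A) s (TA A s v)
  have horth : inner ℝ (aproj A s v) (mulv (aeval A q') v - aproj A s v) = 0 :=
    inner_aproj_eq_zero (aeval_sub_aproj_mem_Krylov hq' hq'd)
  have hkey : inner ℝ (aproj A s v) (mulv (aeval A q') v) = ν ^ 2 := by
    rw [inner_sub_right, real_inner_self_eq_norm_sq, sub_eq_zero] at horth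
    exact horth
  calc inner ℝ (aproj A s (TA A s v)) v
      = ν⁻¹ * inner ℝ (mulv (aeval A q') (aproj A s v)) v := by
        rw [← hq'v, TA, mulv_smul, real_inner_smul_left]
    _ = ν⁻¹ * ν ^ 2 := by
        rw [inner_mulv_of_isSymm (hA.aeval q'), hkey]
    _ = ν := by
        rcases eq_or_ne ν 0 with h | h
        · simp [h]
        · field_simp

lemma aproj_TA_ne_zero (hA : A.IsSymm) (h : aproj A s v ≠ 0) : aproj A s (TA A s v) ≠ 0 := by
  intro h0
  have := inner_aproj_TA (s := s) (v := v) hA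
  rw [h0, inner_zero_left, eq_comm, norm_eq_zero] at this
  exact h this

lemma norm_aproj_le_norm_aproj_TA (hA : A.IsSymm) (hv : ‖v‖ = 1) :
    ‖aproj A s v‖ ≤ ‖aproj A s (TA A s v)‖ :=
  calc ‖aproj A s v‖ = inner ℝ (aproj A s (TA A s v)) v := (inner_aproj_TA hA).symm
    _ ≤ ‖aproj A s (TA A s v)‖ * ‖v‖ := real_inner_le_norm _ _
    _ = ‖aproj A s (TA A s v)‖ := by rw [hv, mul_one]

lemma aproj_TA_eq_smul_of_norm_eq (hA : A.IsSymm) (hv : ‖v‖ = 1)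
    (heq : ‖aproj A s (TA A s v)‖ = ‖aproj A s v‖) :
    aproj A s (TA A s v) = ‖aproj A s v‖ • v := by
  have hcs : inner ℝ (aproj A s (TA A s v)) v = ‖aproj A s (TA A s v)‖ * ‖v‖ := by
    rw [inner_aproj_TA hA, hv, mul_one, heq]
  rw [inner_eq_norm_mul_iff_real, hv, one_smul, heq] at hcs
  exact hcs

section Iteration

variable {u : ℕ → EuclideanSpace ℝ ι}

lemma norm_eq_one_and_aproj_ne_zero_of_TA (hA : A.IsSymm) (hu : ∀ k, u (k + 1) = TA A s (u k))
    (h0 : ‖u 0‖ = 1) (h0' : aproj A s (u 0) ≠ 0) (k : ℕ) :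
    ‖u k‖ = 1 ∧ aproj A s (u k) ≠ 0 := by
  induction k with
  | zero => exact ⟨h0, h0'⟩
  | succ k ih => exact hu k ▸ ⟨norm_TA ih.2, aproj_TA_ne_zero hA ih.2⟩

lemma monotone_norm_aproj_of_TA (hA : A.IsSymm) (hu : ∀ k, u (k + 1) = TA A s (u k))
    (hunit : ∀ k, ‖u k‖ = 1) : Monotone fun k => ‖aproj A s (u k)‖ :=
  monotone_nat_of_le_succ fun k => hu k ▸ norm_aproj_le_norm_aproj_TA hA (hunit k)

end Iteration

lemma continuousAt_aproj (h : aproj A s v ≠ 0) : ContinuousAt (aproj A s) v := by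
  have hli : LinearIndependent ℝ (fun i : Fin s => mulv (A ^ (i : ℕ)) v) :=
    linearIndependent_krylov fun r hr hrs =>
      aeval_ne_zero_of_aproj_ne_zero h hr (natDegree_lt_iff_degree_lt hr |>.mpr hrs).le
  exact (continuous_mulv _).continuousAt.sub <| continuousAt_starProjection_span_range
    (continuous_pi fun i => continuous_mulv _) (continuous_mulv _) hli

lemma continuousAt_TA (h : aproj A s v ≠ 0) : ContinuousAt (TA A s) v :=
  ((continuousAt_aproj h).norm.inv₀ (norm_ne_zero_iff.mpr h)).smul (continuousAt_aproj h)

lemma norm_aproj_eq_of_tendsto {α : Type*} {l : Filter α} [l.NeBot] {u : α → EuclideanSpace ℝ ι}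
    {τ : ℝ} (hu : Tendsto u l (𝓝 v)) (hτ : Tendsto (fun k => ‖aproj A s (u k)‖) l (𝓝 τ))
    (hτpos : 0 < τ) : ‖aproj A s v‖ = τ := by
  obtain ⟨q, hq, hqd, hqv⟩ := exists_monic_aeval_eq_aproj (A := A) s v
  -- `‖aproj A s ·‖` is the minimum of the continuous `‖q(A) ·‖` over monic `q` of degree `s`.
  have hle : τ ≤ ‖aproj A s v‖ := by
    rw [← hqv]
    exact le_of_tendsto_of_tendsto' hτ (((continuous_mulv _).tendsto v).comp hu).norm
      fun k => norm_aproj_le hq hqd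
  have hne : aproj A s v ≠ 0 := norm_pos_iff.mp (hτpos.trans_le hle)
  exact tendsto_nhds_unique (((continuousAt_aproj hne).tendsto.comp hu).norm) hτ

lemma exists_monic_mul_aeval_eq_sq_smul {τ : ℝ} (hτ : τ ≠ 0)
    (hfix : aproj A s (τ⁻¹ • aproj A s v) = τ • v) :
    ∃ Q p q : ℝ[X], Q = p * q ∧ p.Monic ∧ p.natDegree = s ∧ q.Monic ∧ q.natDegree = s ∧
      mulv (aeval A q) v = aproj A s v ∧
      mulv (aeval A p) (τ⁻¹ • aproj A s v) = aproj A s (τ⁻¹ • aproj A s v) ∧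
      mulv (aeval A Q) v = (τ ^ 2) • v := by
  obtain ⟨q, hq, hqd, hqv⟩ := exists_monic_aeval_eq_aproj (A := A) s v
  obtain ⟨p, hp, hpd, hpw⟩ := exists_monic_aeval_eq_aproj (A := A) s (τ⁻¹ • aproj A s v)
  refine ⟨p * q, p, q, rfl, hp, hpd, hq, hqd, hqv, hpw, ?_⟩
  have hpv : mulv (aeval A p) (aproj A s v) = τ • aproj A s (τ⁻¹ • aproj A s v) := by
    rw [← hpw, ← mulv_smul, smul_inv_smul₀ hτ]
  rw [map_mul, mulv_mul, hqv, hpv, hfix, smul_smul, sq]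

lemma vgrade_le_of_aeval_eq_smul {Q : ℝ[X]} (hQ : 0 < Q.natDegree) {c : ℝ}
    (h : mulv (aeval A Q) v = c • v) : vgrade A v ≤ Q.natDegree := by
  have hne : Q - C c ≠ 0 := fun h0 => by
    rw [sub_eq_zero.mp h0, natDegree_C] at hQ
    exact hQ.false
  calc vgrade A v ≤ (Q - C c).natDegree :=
        vgrade_le hne (by rw [map_sub, mulv_sub, aeval_C, mulv_algebraMap, h, sub_self])
    _ = Q.natDegree := natDegree_sub_C

end Arnoldi

theorem symmetric_limit_degree_general {n : ℕ} (A : Matrix (Fin n) (Fin n) ℝ)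
    (hA : A.IsSymm) (s : ℕ) (hs1 : 1 ≤ s)
    (v vt : ℕ → EuclideanSpace ℝ (Fin n))
    (hv0 : ‖v 0‖ = 1) (hg : s + 1 ≤ vgrade A (v 0))
    (hproj : ∀ k, IsArnoldiProj A s (v k) (vt (k + 1)))
    (hnorm : ∀ k, v (k + 1) = ‖vt (k + 1)‖⁻¹ • vt (k + 1))
    (τ : ℝ) (hτ : Tendsto (fun k => ‖vt (k + 1)‖) atTop (𝓝 τ))
    (vstar : EuclideanSpace ℝ (Fin n))
    (hlim : ∃ φ : ℕ → ℕ, StrictMono φ ∧ Tendsto ((fun k => v (2 * k)) ∘ φ) atTop (𝓝 vstar)) :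
    (∃ Q p q : ℝ[X], Q = p * q ∧ p.Monic ∧ p.natDegree = s ∧ q.Monic ∧ q.natDegree = s ∧
      mulv (aeval A q) vstar = aproj A s vstar ∧
      mulv (aeval A p) (τ⁻¹ • aproj A s vstar) = aproj A s (τ⁻¹ • aproj A s vstar) ∧
      mulv (aeval A Q) vstar = (τ ^ 2) • vstar) ∧
    s < vgrade A vstar ∧ vgrade A vstar ≤ 2 * s := by
  obtain ⟨φ, hφ, hlim⟩ := hlim
  simp only [(hproj _).eq_aproj] at hnorm hτ
  have hstep : ∀ k, v (k + 1) = TA A s (v k) := hnorm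
  obtain ⟨hunit, hne⟩ := forall_and.mp <| norm_eq_one_and_aproj_ne_zero_of_TA hA hstep hv0
    (aproj_ne_zero_iff_lt_vgrade.mpr hg)
  have hτpos : 0 < τ := (norm_pos_iff.mpr (hne 0)).trans_le
    ((monotone_norm_aproj_of_TA hA hstep hunit).ge_of_tendsto hτ 0)
  have hψ : Tendsto (fun k => 2 * φ k) atTop atTop :=
    tendsto_id.const_mul_atTop' two_pos |>.comp hφ.tendsto_atTop
  have hvstar : ‖aproj A s vstar‖ = τ := norm_aproj_eq_of_tendsto hlim (hτ.comp hψ) hτpos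
  have hne_star : aproj A s vstar ≠ 0 := norm_pos_iff.mp (hvstar ▸ hτpos)
  have hTA : ‖aproj A s (TA A s vstar)‖ = τ := by
    refine norm_aproj_eq_of_tendsto ((continuousAt_TA hne_star).tendsto.comp hlim) ?_ hτpos
    simpa [Function.comp_def, ← hstep] using hτ.comp (tendsto_add_atTop_nat 1 |>.comp hψ)
  have hfix := aproj_TA_eq_smul_of_norm_eq hA
    (tendsto_nhds_unique hlim.norm (by simp [hunit])) (hTA.trans hvstar.symm)
  rw [TA, hvstar] at hfix
  obtain ⟨Q, p, q, rfl, hp, hpd, hq, hqd, hqv, hpw, hQ⟩ :=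
    exists_monic_mul_aeval_eq_sq_smul hτpos.ne' hfix
  have hdeg : (p * q).natDegree = 2 * s := by rw [hp.natDegree_mul hq, hpd, hqd, two_mul]
  refine ⟨⟨p * q, p, q, rfl, hp, hpd, hq, hqd, hqv, hpw, hQ⟩,
    aproj_ne_zero_iff_lt_vgrade.mp hne_star, ?_⟩
  exact hdeg ▸ vgrade_le_of_aeval_eq_smul (by omega) hQ

theorem symmetric_limit_degree {n : ℕ} (A : Matrix (Fin n) (Fin n) ℝ)
    (hA : A.IsSymm) (s : ℕ) (hs1 : 1 ≤ s) (hs2 : s < dmin A)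
    (v vt : ℕ → EuclideanSpace ℝ (Fin n))
    (hv0 : ‖v 0‖ = 1) (hg : s + 1 ≤ vgrade A (v 0))
    (hproj : ∀ k, IsArnoldiProj A s (v k) (vt (k + 1)))
    (hnorm : ∀ k, v (k + 1) = ‖vt (k + 1)‖⁻¹ • vt (k + 1))
    (τ : ℝ) (hτ : Tendsto (fun k => ‖vt (k + 1)‖) atTop (𝓝 τ))
    (vstar : EuclideanSpace ℝ (Fin n))
    (hlim : ∃ φ : ℕ → ℕ, StrictMono φ ∧ Tendsto ((fun k => v (2 * k)) ∘ φ) atTop (𝓝 vstar)) :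
    (∃ Q p q : ℝ[X], Q = p * q ∧ p.Monic ∧ p.natDegree = s ∧ q.Monic ∧ q.natDegree = s ∧
      mulv (aeval A q) vstar = aproj A s vstar ∧
      mulv (aeval A p) (τ⁻¹ • aproj A s vstar) = aproj A s (τ⁻¹ • aproj A s vstar) ∧
      mulv (aeval A Q) vstar = (τ ^ 2) • vstar) ∧
    s < vgrade A vstar ∧ vgrade A vstar ≤ 2 * s :=
  symmetric_limit_degree_general A hA s hs1 v vt hv0 hg hproj hnorm τ hτ vstar hlim
end
end

section
/- Let A ∈ ℝ^{n×n}. Then min over α ∈ ℝ of the operator norm ‖A − αI‖ equals max over unit vectors v ∈ ℝⁿ of (‖Av‖² − ⟨v, Av⟩²)^{1/2}. -/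
open Polynomial Filter Topology Matrix

noncomputable section

/-!
For a unit vector `v`, `‖(A - β)v‖² = ‖Av‖² - 2β⟪v, Av⟫ + β² ≥ ‖Av‖² - ⟪v, Av⟫²`, which gives
`≥`. Conversely, let `α₀` minimise `‖A - α‖` and put `M = A - α₀`. A maximising unit vector of
`M - ε` (`ε > 0`) nearly maximises `‖M ·‖` and has `⟪u, Mu⟫ ≤ ε`, so by compactness some unit
`v` with `‖Mv‖ = ‖M‖` has `⟪v, Mv⟫ ≤ 0`; likewise (with `-ε`) some `w` has `⟪w, Mw⟫ ≥ 0`.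
Such vectors lie in the eigenspace of `M*M` for `‖M‖²`, so the intermediate value theorem on the
segment `[v, w]` inside that eigenspace yields a unit `u` with `‖Mu‖ = ‖M‖` and `⟪u, Mu⟫ = 0`,
i.e. `⟪u, Au⟫ = α₀`; then `‖A - α₀‖ = ‖Mu‖ = (‖Au‖² - ⟪u, Au⟫²)^(1/2)`.
-/

open Filter
open scoped InnerProductSpace

theorem exists_forall_norm_sub_smul_le {F : Type*} [NormedAddCommGroup F]
    [NormedSpace ℝ F] (x : F) {y : F} (hy : y ≠ 0) :
    ∃ α₀ : ℝ, ∀ α : ℝ, ‖x - α₀ • y‖ ≤ ‖x - α • y‖ := by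
  refine (by fun_prop : Continuous fun α : ℝ => ‖x - α • y‖).exists_forall_le ?_
  have hcoercive : Tendsto (fun α : ℝ => ‖α‖ * ‖y‖ - ‖x‖) (cocompact ℝ) atTop :=
    tendsto_atTop_add_const_right _ _
      (tendsto_norm_cocompact_atTop.atTop_mul_const (norm_pos_iff.mpr hy))
  refine tendsto_atTop_mono (fun α => ?_) hcoercive
  rw [← norm_smul]
  linarith [norm_sub_norm_le (α • y) x, norm_sub_rev x (α • y)]

namespace ContinuousLinearMap

section Normed

variable {E F : Type*} [NormedAddCommGroup E] [NormedSpace ℝ E] [NormedAddCommGroup F]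
  [NormedSpace ℝ F]

theorem exists_norm_eq_one_norm_apply_eq_opNorm [FiniteDimensional ℝ E] [Nontrivial E]
    (T : E →L[ℝ] F) :
    ∃ v : E, ‖v‖ = 1 ∧ ‖T v‖ = ‖T‖ := by
  obtain ⟨v, hv, hmax⟩ := (isCompact_sphere (0 : E) 1).exists_isMaxOn
    (NormedSpace.sphere_nonempty.mpr zero_le_one) T.continuous.norm.continuousOn
  rw [mem_sphere_zero_iff_norm] at hv
  exact ⟨v, hv, le_antisymm (T.unit_le_opNorm v hv.le)
    (opNorm_le_of_unit_norm (norm_nonneg _) fun x hx => hmax (mem_sphere_zero_iff_norm.mpr hx))⟩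

theorem sub_smul_one_apply (T : E →L[ℝ] E) (β : ℝ) (v : E) : (T - β • 1) v = T v - β • v := by
  simp

end Normed

variable {E : Type*} [NormedAddCommGroup E] [InnerProductSpace ℝ E]

theorem norm_sub_smul_one_apply_sq (T : E →L[ℝ] E) (β : ℝ) (v : E) :
    ‖(T - β • 1) v‖ ^ 2 = ‖T v‖ ^ 2 - 2 * β * ⟪v, T v⟫_ℝ + β ^ 2 * ‖v‖ ^ 2 := by
  rw [sub_smul_one_apply, norm_sub_sq_real, real_inner_smul_right,
    real_inner_comm, norm_smul, Real.norm_eq_abs, mul_pow, sq_abs]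
  ring

theorem sqrt_norm_apply_sq_sub_inner_sq_le (T : E →L[ℝ] E) (β : ℝ) {v : E} (hv : ‖v‖ = 1) :
    √(‖T v‖ ^ 2 - ⟪v, T v⟫_ℝ ^ 2) ≤ ‖T - β • 1‖ := by
  have hsq : ‖T v‖ ^ 2 - ⟪v, T v⟫_ℝ ^ 2 ≤ ‖(T - β • 1) v‖ ^ 2 := by
    rw [norm_sub_smul_one_apply_sq, hv]
    nlinarith [sq_nonneg (β - ⟪v, T v⟫_ℝ)]
  calc √(‖T v‖ ^ 2 - ⟪v, T v⟫_ℝ ^ 2) ≤ ‖(T - β • 1) v‖ :=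
        (Real.sqrt_le_left (norm_nonneg _)).mpr hsq
    _ ≤ ‖T - β • 1‖ := (T - β • 1).unit_le_opNorm v hv.le

theorem exists_mem_ne_zero_inner_apply_eq_zero (M : E →L[ℝ] E) (V : Submodule ℝ E) {v w : E}
    (hv : v ∈ V) (hw : w ∈ V) (hqv : ⟪v, M v⟫_ℝ < 0) (hqw : 0 < ⟪w, M w⟫_ℝ) :
    ∃ z ∈ V, z ≠ 0 ∧ ⟪z, M z⟫_ℝ = 0 := by
  set q : E → ℝ := fun x => ⟪x, M x⟫_ℝ
  have hq_smul : ∀ (c : ℝ) x, q (c • x) = c ^ 2 * q x := fun c x => by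
    simp only [q, map_smul, real_inner_smul_left, real_inner_smul_right]; ring
  set z : ℝ → E := fun t => (1 - t) • v + t • w
  obtain ⟨t, -, hzt⟩ : ∃ t ∈ Set.Icc (0 : ℝ) 1, q (z t) = 0 :=
    intermediate_value_Icc zero_le_one (by fun_prop : Continuous (q ∘ z)).continuousOn
      ⟨by simpa [z] using hqv.le, by simpa [z] using hqw.le⟩
  refine ⟨z t, V.add_mem (V.smul_mem _ hv) (V.smul_mem _ hw), fun hz => ?_, hzt⟩
  have h := congrArg q (eq_neg_of_add_eq_zero_left hz)
  rw [hq_smul, ← neg_smul, hq_smul] at h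
  -- `(1 - t) • v = -(t • w)` would force `(1 - t)² q v = t² q w`, impossible as `q v < 0 < q w`
  have hqv' : q v < 0 := hqv
  nlinarith [mul_pos hqw (neg_pos.mpr hqv'), sq_nonneg (t * q w + (1 - t) * q v),
    congrArg (· * (q w - q v)) h]

section Adjoint

variable {F : Type*} [NormedAddCommGroup F] [InnerProductSpace ℝ F] [CompleteSpace E]
  [CompleteSpace F]

theorem adjoint_comp_self_apply_of_norm_apply_eq_opNorm (T : E →L[ℝ] F) {v : E} (hv : ‖v‖ = 1)
    (hTv : ‖T v‖ = ‖T‖) : (adjoint T ∘L T) v = ‖T‖ ^ 2 • v := by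
  set S := adjoint T ∘L T
  have hinner : ⟪v, S v⟫_ℝ = ‖T‖ ^ 2 := by
    rw [comp_apply, adjoint_inner_right, real_inner_self_eq_norm_sq, hTv]
  have hSv : ‖S v‖ = ‖T‖ ^ 2 := by
    refine le_antisymm ((S.unit_le_opNorm v hv.le).trans_eq ?_) ?_
    · rw [norm_adjoint_comp_self, sq]
    · simpa [hinner, hv] using real_inner_le_norm v (S v)
  have hcs := inner_eq_norm_mul_iff_real.mp (by rw [hinner, hv, one_mul, hSv])
  rwa [hv, one_smul, hSv, eq_comm] at hcs

theorem norm_apply_eq_of_adjoint_comp_self_apply (T : E →L[ℝ] F) {x : E}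
    (hx : (adjoint T ∘L T) x = ‖T‖ ^ 2 • x) : ‖T x‖ = ‖T‖ * ‖x‖ := by
  have hsq : ‖T x‖ ^ 2 = (‖T‖ * ‖x‖) ^ 2 := by
    rw [← real_inner_self_eq_norm_sq, ← adjoint_inner_right, ← comp_apply, hx,
      real_inner_smul_right, real_inner_self_eq_norm_sq]
    ring
  exact (sq_eq_sq₀ (norm_nonneg _) (by positivity)).mp hsq

end Adjoint

section FiniteDimensional

variable [FiniteDimensional ℝ E]

section Nontrivial

variable [Nontrivial E]

theorem exists_opNorm_sub_norm_apply_le_inner_le (M : E →L[ℝ] E)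
    (hmin : ∀ ε : ℝ, ‖M‖ ≤ ‖M - ε • 1‖) {ε : ℝ} (hε : 0 < ε) :
    ∃ u : E, ‖u‖ = 1 ∧ ‖M‖ - ‖M u‖ ≤ ε ∧ ⟪u, M u⟫_ℝ ≤ ε := by
  obtain ⟨u, hu, hmax⟩ := (M - ε • 1).exists_norm_eq_one_norm_apply_eq_opNorm
  have hlow : ‖M‖ ≤ ‖(M - ε • 1) u‖ := hmax ▸ hmin ε
  have hup : ‖(M - ε • 1) u‖ ≤ ‖M u‖ + ε := by
    rw [sub_smul_one_apply]
    exact (norm_sub_le _ _).trans_eq (by rw [norm_smul, hu, mul_one, Real.norm_of_nonneg hε.le])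
  have hMu : ‖M u‖ ≤ ‖M‖ := M.unit_le_opNorm u hu.le
  have hexp := M.norm_sub_smul_one_apply_sq ε u
  rw [hu] at hexp
  refine ⟨u, hu, by linarith, ?_⟩
  -- `‖M u‖² ≤ ‖(M - ε • 1) u‖² = ‖M u‖² - 2ε⟪u, M u⟫ + ε²`
  nlinarith [pow_le_pow_left₀ (norm_nonneg _) (hMu.trans hlow) 2]

theorem exists_norm_apply_eq_opNorm_inner_nonpos (M : E →L[ℝ] E)
    (hmin : ∀ ε : ℝ, ‖M‖ ≤ ‖M - ε • 1‖) :
    ∃ v : E, ‖v‖ = 1 ∧ ‖M v‖ = ‖M‖ ∧ ⟪v, M v⟫_ℝ ≤ 0 := by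
  set g : E → ℝ := fun u => max (‖M‖ - ‖M u‖) ⟪u, M u⟫_ℝ
  obtain ⟨v, hv, hvmin⟩ := (isCompact_sphere (0 : E) 1).exists_isMinOn
    (NormedSpace.sphere_nonempty.mpr zero_le_one) (by fun_prop : Continuous g).continuousOn
  rw [mem_sphere_zero_iff_norm] at hv
  have hgv : g v ≤ 0 := le_of_forall_pos_le_add fun ε hε => by
    obtain ⟨u, hu, hnorm, hinner⟩ := exists_opNorm_sub_norm_apply_le_inner_le M hmin hε
    rw [zero_add]
    exact (hvmin (mem_sphere_zero_iff_norm.mpr hu)).trans (max_le hnorm hinner)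
  obtain ⟨hnorm, hinner⟩ := max_le_iff.mp hgv
  exact ⟨v, hv, le_antisymm (M.unit_le_opNorm v hv.le) (by linarith), hinner⟩

theorem exists_norm_apply_eq_opNorm_inner_eq_zero (M : E →L[ℝ] E)
    (hmin : ∀ ε : ℝ, ‖M‖ ≤ ‖M - ε • 1‖) :
    ∃ v : E, ‖v‖ = 1 ∧ ‖M v‖ = ‖M‖ ∧ ⟪v, M v⟫_ℝ = 0 := by
  obtain ⟨v, hv, hMv, hqv⟩ := exists_norm_apply_eq_opNorm_inner_nonpos M hmin
  obtain ⟨w, hw, hMw, hqw⟩ := exists_norm_apply_eq_opNorm_inner_nonpos (-M) fun ε => by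
    calc ‖-M‖ = ‖M‖ := norm_neg M
      _ ≤ ‖M - (-ε) • 1‖ := hmin _
      _ = ‖-M - ε • 1‖ := by rw [← norm_neg]; congr 1; module
  rw [_root_.neg_apply, norm_neg, norm_neg] at hMw
  rw [_root_.neg_apply, inner_neg_right, neg_nonpos] at hqw
  rcases hqv.eq_or_lt with hqv | hqv
  · exact ⟨v, hv, hMv, hqv⟩
  rcases hqw.eq_or_lt with hqw | hqw
  · exact ⟨w, hw, hMw, hqw.symm⟩
  set V := Module.End.eigenspace (adjoint M ∘L M : E →ₗ[ℝ] E) (‖M‖ ^ 2)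
  have hmem : ∀ x, ‖x‖ = 1 → ‖M x‖ = ‖M‖ → x ∈ V := fun x hx hMx =>
    Module.End.mem_eigenspace_iff.mpr (adjoint_comp_self_apply_of_norm_apply_eq_opNorm M hx hMx)
  obtain ⟨z, hzV, hz0, hqz⟩ :=
    exists_mem_ne_zero_inner_apply_eq_zero M V (hmem v hv hMv) (hmem w hw hMw) hqv hqw
  have hu : ‖‖z‖⁻¹ • z‖ = 1 := norm_smul_inv_norm hz0
  refine ⟨‖z‖⁻¹ • z, hu, ?_, ?_⟩
  · rw [norm_apply_eq_of_adjoint_comp_self_apply M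
      (Module.End.mem_eigenspace_iff.mp (V.smul_mem _ hzV)), hu, mul_one]
  · rw [map_smul, real_inner_smul_left, real_inner_smul_right, hqz, mul_zero, mul_zero]

end Nontrivial

theorem sInf_norm_sub_smul_one_eq_sSup (T : E →L[ℝ] E) :
    sInf {r : ℝ | ∃ α : ℝ, r = ‖T - α • 1‖} =
      sSup {r : ℝ | ∃ v : E, ‖v‖ = 1 ∧ r = √(‖T v‖ ^ 2 - ⟪v, T v⟫_ℝ ^ 2)} := by
  rcases subsingleton_or_nontrivial E with hE | hE
  · have hnorm : ∀ α : ℝ, ‖T - α • 1‖ = 0 := fun α => by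
      rw [Subsingleton.elim (T - α • 1) 0, norm_zero]
    have hsphere : ∀ v : E, ‖v‖ ≠ 1 := fun v => by simp [Subsingleton.elim v 0]
    simp [hnorm, hsphere]
  obtain ⟨α₀, hα₀⟩ := exists_forall_norm_sub_smul_le T (one_ne_zero : (1 : E →L[ℝ] E) ≠ 0)
  obtain ⟨v, hv, hMv, hqv⟩ := exists_norm_apply_eq_opNorm_inner_eq_zero (T - α₀ • 1) fun ε => by
    simpa only [sub_sub, ← add_smul] using hα₀ (α₀ + ε)
  have hα₀v : ⟪v, T v⟫_ℝ = α₀ := by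
    rw [sub_smul_one_apply, inner_sub_right, real_inner_smul_right,
      real_inner_self_eq_norm_sq, hv] at hqv
    linarith
  have hval : ‖T - α₀ • 1‖ = √(‖T v‖ ^ 2 - ⟪v, T v⟫_ℝ ^ 2) := by
    rw [← hMv, ← Real.sqrt_sq (norm_nonneg _), norm_sub_smul_one_apply_sq, hv, hα₀v]
    ring_nf
  have hleast : IsLeast {r : ℝ | ∃ α : ℝ, r = ‖T - α • 1‖} ‖T - α₀ • 1‖ :=
    ⟨⟨α₀, rfl⟩, by rintro _ ⟨α, rfl⟩; exact hα₀ α⟩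
  have hgreatest : IsGreatest {r : ℝ | ∃ v : E, ‖v‖ = 1 ∧ r = √(‖T v‖ ^ 2 - ⟪v, T v⟫_ℝ ^ 2)}
      ‖T - α₀ • 1‖ :=
    ⟨⟨v, hv, hval⟩, by rintro _ ⟨u, hu, rfl⟩; exact sqrt_norm_apply_sq_sub_inner_sq_le T α₀ hu⟩
  rw [hleast.csInf_eq, hgreatest.csSup_eq]

end FiniteDimensional

end ContinuousLinearMap

theorem ideal_arnoldi_s1 {n : ℕ} (A : Matrix (Fin n) (Fin n) ℝ) :
    sInf {r : ℝ | ∃ α : ℝ, r = opNorm (A - α • (1 : Matrix (Fin n) (Fin n) ℝ))} =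
    sSup {r : ℝ | ∃ v : EuclideanSpace ℝ (Fin n), ‖v‖ = 1 ∧
      r = Real.sqrt (‖mulv A v‖ ^ 2 - (inner ℝ v (mulv A v) : ℝ) ^ 2)} := by
  have hopNorm : ∀ α : ℝ, opNorm (A - α • 1) = ‖toEuclideanCLM (𝕜 := ℝ) A - α • 1‖ :=
    fun α => by rw [opNorm, map_sub, map_smul, map_one]
  have hmulv : ∀ v, mulv A v = toEuclideanCLM (𝕜 := ℝ) A v := fun _ => rfl
  simp only [hopNorm, hmulv]
  exact ContinuousLinearMap.sInf_norm_sub_smul_one_eq_sSup _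
end
end
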